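/- Let M be a symmetric invertible n×n real matrix, V : ℝ^n → ℝ a C¹ potential, h > 0, and define the map 𝓛_d : (ℝ^n × ℝ^n) × (ℝ^n × ℝ^n) → ℝ by 𝓛_d(x, p, x', p') = (1/4)‖p − M(x'−x)/h − (h/2)∇V(x)‖² + (1/4)‖p' − M(x'−x)/h + (h/2)∇V(x')‖². Then for any points x_{k-1}, x_k, x_{k+1} ∈ ℝ^n and momenta p_{k-1}, p_k, p_{k+1} ∈ ℝ^n, the discrete Euler–Lagrange equation in the momentum slot, D_4 𝓛_d(x_{k-1}, p_{k-1}, x_k, p_k) + D_2 𝓛_d(x_k, p_k, x_{k+1}, p_{k+1}) = 0, is equivalent to p_k = M (x_{k+1} − x_{k-1}) / (2h). -/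

import Mathlib

/-!
In each momentum slot `𝓛_d` is `¼‖w − c‖²` plus a constant, with derivative `½⟪w − c, ·⟫`.
The discrete Euler–Lagrange equation therefore reads `2 p_k = c₁ + c₂`, and in `c₁ + c₂` the
forcing terms `∓(h/2)∇V(x_k)` cancel, leaving `M(x_{k+1} − x_{k−1})/h`.
-/

/-- The optimal-control Lagrangian `𝓛_d` on `T*ℝⁿ × T*ℝⁿ` associated with the trapezoidal
discretization of the mechanical Lagrangian `L(x,ẋ) = ½ẋᵀMẋ − V(x)` and the
squared-control-effort cost:
`𝓛_d(x,p,x',p') = ¼‖p − M(x'−x)/h − (h/2)∇V(x)‖² + ¼‖p' − M(x'−x)/h + (h/2)∇V(x')‖²`. -/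
noncomputable def cLd {n : ℕ} (M : Matrix (Fin n) (Fin n) ℝ)
    (V : EuclideanSpace ℝ (Fin n) → ℝ) (h : ℝ)
    (x p x' p' : EuclideanSpace ℝ (Fin n)) : ℝ :=
  (1 / 4) * ‖p - h⁻¹ • Matrix.toEuclideanLin M (x' - x) - (h / 2) • gradient V x‖ ^ 2
    + (1 / 4) * ‖p' - h⁻¹ • Matrix.toEuclideanLin M (x' - x) + (h / 2) • gradient V x'‖ ^ 2

lemma hasFDerivAt_quarter_norm_sub_sq_add {E : Type*} [NormedAddCommGroup E]
    [InnerProductSpace ℝ E] (a : E) (C : ℝ) (x : E) :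
    HasFDerivAt (fun w => (1 / 4) * ‖w - a‖ ^ 2 + C) ((1 / 2 : ℝ) • innerSL ℝ (x - a)) x := by
  have hsq : HasFDerivAt (fun w => ‖w - a‖ ^ 2) (2 • innerSL ℝ (x - a)) x := by
    simpa using ((hasFDerivAt_id x).sub_const a).norm_sq
  refine ((hsq.const_mul (1 / 4 : ℝ)).add_const C).congr_fderiv ?_
  ext v
  simp only [smul_apply, innerSL_apply_apply, smul_eq_mul, nsmul_eq_mul]
  ring

section MomentumDerivatives

variable {n : ℕ} (M : Matrix (Fin n) (Fin n) ℝ) (V : EuclideanSpace ℝ (Fin n) → ℝ) (h : ℝ)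
  (x p x' p' q : EuclideanSpace ℝ (Fin n))

lemma fderiv_cLd_fourth :
    fderiv ℝ (fun w => cLd M V h x p x' w) q
      = (1 / 2 : ℝ) • innerSL ℝ
          (q - (h⁻¹ • Matrix.toEuclideanLin M (x' - x) - (h / 2) • gradient V x')) := by
  have hcLd : (fun w => cLd M V h x p x' w)
      = fun w => (1 / 4) * ‖w - (h⁻¹ • Matrix.toEuclideanLin M (x' - x)
            - (h / 2) • gradient V x')‖ ^ 2
          + (1 / 4) * ‖p - h⁻¹ • Matrix.toEuclideanLin M (x' - x)
            - (h / 2) • gradient V x‖ ^ 2 := by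
    funext w
    rw [cLd, add_comm, sub_sub_eq_add_sub, add_sub_right_comm]
  rw [hcLd, (hasFDerivAt_quarter_norm_sub_sq_add _ _ q).fderiv]

lemma fderiv_cLd_second :
    fderiv ℝ (fun w => cLd M V h x w x' p') q
      = (1 / 2 : ℝ) • innerSL ℝ
          (q - (h⁻¹ • Matrix.toEuclideanLin M (x' - x) + (h / 2) • gradient V x)) := by
  have hcLd : (fun w => cLd M V h x w x' p')
      = fun w => (1 / 4) * ‖w - (h⁻¹ • Matrix.toEuclideanLin M (x' - x)
            + (h / 2) • gradient V x)‖ ^ 2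
          + (1 / 4) * ‖p' - h⁻¹ • Matrix.toEuclideanLin M (x' - x)
            + (h / 2) • gradient V x'‖ ^ 2 := by
    funext w
    rw [cLd, sub_sub]
  rw [hcLd, (hasFDerivAt_quarter_norm_sub_sq_add _ _ q).fderiv]

end MomentumDerivatives

theorem stmt_7_general {n : ℕ} (M : Matrix (Fin n) (Fin n) ℝ)
    (V : EuclideanSpace ℝ (Fin n) → ℝ)
    (h : ℝ)
    (xkm xk xkp pkm pk pkp : EuclideanSpace ℝ (Fin n)) :
    (fderiv ℝ (fun w => cLd M V h xkm pkm xk w) pk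
        + fderiv ℝ (fun w => cLd M V h xk w xkp pkp) pk = 0)
    ↔ pk = (2 * h)⁻¹ • Matrix.toEuclideanLin M (xkp - xkm) := by
  set A := Matrix.toEuclideanLin M
  have hcentral : (h⁻¹ • A (xk - xkm) - (h / 2) • gradient V xk)
      + (h⁻¹ • A (xkp - xk) + (h / 2) • gradient V xk) = h⁻¹ • A (xkp - xkm) := by
    rw [show xkp - xkm = (xk - xkm) + (xkp - xk) by abel, map_add]
    module
  rw [fderiv_cLd_fourth, fderiv_cLd_second, ← smul_add, ← map_add,
    smul_eq_zero_iff_right (by norm_num), ← map_zero (innerSL ℝ), innerSL_inj,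
    sub_add_sub_comm, hcentral, sub_eq_zero, mul_inv, ← smul_smul,
    eq_inv_smul_iff₀ two_ne_zero, two_smul]

/-- For the optimal-control Lagrangian `𝓛_d` built from a symmetric invertible mass matrix
`M`, a C¹ potential `V` and a time step `h > 0`, the discrete Euler–Lagrange equation in
the momentum slot, `D₄𝓛_d(x_{k-1},p_{k-1},x_k,p_k) + D₂𝓛_d(x_k,p_k,x_{k+1},p_{k+1}) = 0`,
is equivalent to `p_k = M(x_{k+1} − x_{k-1})/(2h)`. -/
theorem stmt_7 {n : ℕ} (M : Matrix (Fin n) (Fin n) ℝ)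
    (hM : M.IsSymm) (hMinv : IsUnit M)
    (V : EuclideanSpace ℝ (Fin n) → ℝ) (hV : ContDiff ℝ 1 V)
    (h : ℝ) (hh : 0 < h)
    (xkm xk xkp pkm pk pkp : EuclideanSpace ℝ (Fin n)) :
    (fderiv ℝ (fun w => cLd M V h xkm pkm xk w) pk
        + fderiv ℝ (fun w => cLd M V h xk w xkp pkp) pk = 0)
    ↔ pk = (2 * h)⁻¹ • Matrix.toEuclideanLin M (xkp - xkm) :=
  stmt_7_general M V h xkm xk xkp pkm pk pkp
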